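/- arXiv:2005.00853 — 4 statements merged into one kernel-verified Lean document; each statement's English description precedes it below -/
import Mathlib

section
/- For all real $B \ge 2$: $\frac{1}{2} + \frac{1}{2B} \le B^{-1/(B^2-1)}$. -/
/-!
Compare logarithms. By `log y ≤ y - 1`, the logarithm of the left-hand side is at most
`-(B - 1) / (2B)`. On the other side, `t ≤ sinh t` at `t = log B` gives
`log B ≤ (B - B⁻¹) / 2 = (B² - 1) / (2B)`, so `log B / (B² - 1) ≤ 1 / (2B) ≤ (B - 1) / (2B)`
as soon as `B ≥ 2`.
-/

open Real

namespace Real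

lemma log_le_half_sub_inv {x : ℝ} (hx : 1 ≤ x) : log x ≤ (x - x⁻¹) / 2 := by
  rw [← sinh_log (by positivity)]
  exact self_le_sinh_iff.2 (log_nonneg hx)

lemma log_div_sq_sub_one_le {B : ℝ} (hB : 2 ≤ B) : log B / (B ^ 2 - 1) ≤ (B - 1) / (2 * B) := by
  have hB0 : 0 < B := by linarith
  have hp : 0 < B ^ 2 - 1 := by nlinarith
  rw [div_le_iff₀ hp]
  calc log B ≤ (B - B⁻¹) / 2 := log_le_half_sub_inv (by linarith)
    _ = (B ^ 2 - 1) / (2 * B) * 1 := by field_simp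
    _ ≤ (B ^ 2 - 1) / (2 * B) * (B - 1) := by gcongr; linarith
    _ = (B - 1) / (2 * B) * (B ^ 2 - 1) := by ring

end Real

/-- For all real `B ≥ 2`: `1/2 + 1/(2B) ≤ B^{-1/(B²-1)}`. -/
theorem stmt_10 (B : ℝ) (hB : 2 ≤ B) :
    1 / 2 + 1 / (2 * B) ≤ B ^ (-(1 / (B ^ 2 - 1))) := by
  have hB0 : 0 < B := by linarith
  have hlhs : 0 < 1 / 2 + 1 / (2 * B) := by positivity
  have hlog : log (1 / 2 + 1 / (2 * B)) ≤ -(log B / (B ^ 2 - 1)) :=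
    calc log (1 / 2 + 1 / (2 * B)) ≤ 1 / 2 + 1 / (2 * B) - 1 := log_le_sub_one_of_pos hlhs
      _ = -((B - 1) / (2 * B)) := by field_simp; ring
      _ ≤ -(log B / (B ^ 2 - 1)) := neg_le_neg (log_div_sq_sub_one_le hB)
  calc 1 / 2 + 1 / (2 * B) = exp (log (1 / 2 + 1 / (2 * B))) := (exp_log hlhs).symm
    _ ≤ exp (-(log B / (B ^ 2 - 1))) := exp_le_exp.2 hlog
    _ = B ^ (-(1 / (B ^ 2 - 1))) := by rw [rpow_def_of_pos hB0]; ring_nf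
end

section
/- Let $\alpha \ge 1$, $\gamma \in (0,1)$, and suppose $\sum_{i=1}^m q_i \exp(-p_i n) \le (1-\gamma)/\alpha$ where $q_i \ge 0$, $\sum_i q_i = 1$, $p_i \in [0, 1/2]$. Set $\varepsilon = 1 - \frac{\ln((1-\gamma/2)/\alpha)}{\ln((1-\gamma)/\alpha)}$ and $B = 2/\varepsilon$. Then $B > 2$ and $\sum_{i=1}^m q_i \exp(-p_i n (1 - 2/B)) \le (1 - \gamma/2)/\alpha$. -/
/-!
With `a = (1-γ)/α < b = (1-γ/2)/α < 1`, the quantity `1 - ε` is `log_a b ∈ (0, 1)`, so `B > 2`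
and `1 - 2/B = log_a b`. Since `exp(-x · t) = exp(-x) ^ t` and `y ↦ y ^ t` is concave and
monotone on `[0, ∞)` for `t ∈ [0, 1]`, Jensen's inequality bounds the new sum by
`(∑ qᵢ exp(-pᵢ n)) ^ log_a b ≤ a ^ log_a b = b`.
-/

open Real Finset

theorem sum_mul_rpow_le_rpow_sum_mul {ι : Type*} (s : Finset ι) {w z : ι → ℝ}
    (hw : ∀ i ∈ s, 0 ≤ w i) (hw' : ∑ i ∈ s, w i = 1) (hz : ∀ i ∈ s, 0 ≤ z i)
    {t : ℝ} (ht₀ : 0 ≤ t) (ht₁ : t ≤ 1) :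
    ∑ i ∈ s, w i * z i ^ t ≤ (∑ i ∈ s, w i * z i) ^ t := by
  simpa only [smul_eq_mul] using
    (concaveOn_rpow ht₀ ht₁).le_map_sum hw hw' fun i hi => Set.mem_Ici.mpr (hz i hi)

theorem logb_mem_Ioo_of_lt_of_lt_one {a b : ℝ} (ha₀ : 0 < a) (hab : a < b) (hb₁ : b < 1) :
    logb a b ∈ Set.Ioo 0 1 := by
  have ha₁ : a < 1 := hab.trans hb₁
  have hb₀ : 0 < b := ha₀.trans hab
  exact ⟨logb_pos_of_base_lt_one ha₀ ha₁ hb₀ hb₁,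
    (logb_lt_iff_lt_rpow_of_base_lt_one ha₀ ha₁ hb₀).mpr (by rwa [rpow_one])⟩

theorem sum_mul_exp_mul_logb_le {ι : Type*} (s : Finset ι) {w x : ι → ℝ}
    (hw : ∀ i ∈ s, 0 ≤ w i) (hw' : ∑ i ∈ s, w i = 1) {a b : ℝ} (ha₀ : 0 < a) (hab : a < b)
    (hb₁ : b < 1) (hsum : ∑ i ∈ s, w i * exp (x i) ≤ a) :
    ∑ i ∈ s, w i * exp (x i * logb a b) ≤ b := by
  obtain ⟨ht₀, ht₁⟩ := logb_mem_Ioo_of_lt_of_lt_one ha₀ hab hb₁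
  calc ∑ i ∈ s, w i * exp (x i * logb a b)
      = ∑ i ∈ s, w i * exp (x i) ^ logb a b := by simp only [exp_mul]
    _ ≤ (∑ i ∈ s, w i * exp (x i)) ^ logb a b :=
      sum_mul_rpow_le_rpow_sum_mul s hw hw' (fun i _ => (exp_pos _).le) ht₀.le ht₁.le
    _ ≤ a ^ logb a b :=
      rpow_le_rpow (sum_nonneg fun i hi => mul_nonneg (hw i hi) (exp_pos _).le) hsum ht₀.le
    _ = b := rpow_logb ha₀ (hab.trans hb₁).ne (ha₀.trans hab)

theorem stmt_16_general (m : ℕ) (q p : Fin m → ℝ) (n : ℕ)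
    (hq0 : ∀ i, 0 ≤ q i) (hqsum : ∑ i, q i = 1)
    (α : ℝ) (hα : 1 ≤ α) (γ : ℝ) (hγ0 : 0 < γ) (hγ1 : γ < 1)
    (hsum : ∑ i, q i * Real.exp (-(p i) * n) ≤ (1 - γ) / α)
    (ε B : ℝ)
    (hε : ε = 1 - Real.log ((1 - γ / 2) / α) / Real.log ((1 - γ) / α))
    (hB : B = 2 / ε) :
    2 < B ∧ ∑ i, q i * Real.exp (-(p i) * n * (1 - 2 / B)) ≤ (1 - γ / 2) / α := by
  have hα₀ : 0 < α := one_pos.trans_le hα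
  set a := (1 - γ) / α
  set b := (1 - γ / 2) / α
  have ha₀ : 0 < a := div_pos (by linarith) hα₀
  have hab : a < b := div_lt_div_of_pos_right (by linarith) hα₀
  have hb₁ : b < 1 := (div_lt_one hα₀).mpr (by linarith)
  have hε' : ε = 1 - logb a b := by rw [hε, log_div_log]
  obtain ⟨ht₀, ht₁⟩ := logb_mem_Ioo_of_lt_of_lt_one ha₀ hab hb₁
  have hε₀ : 0 < ε := by linarith
  have hε₁ : ε < 1 := by linarith
  have hexp : 1 - 2 / B = logb a b := by
    rw [hB, div_div_cancel₀ two_ne_zero, hε', sub_sub_cancel]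
  refine ⟨by rw [hB, lt_div_iff₀ hε₀]; linarith, ?_⟩
  rw [hexp]
  exact sum_mul_exp_mul_logb_le univ (fun i _ => hq0 i) hqsum ha₀ hab hb₁ hsum

/-- Lemma 6 of the paper: if `∑ qᵢ exp(-pᵢn) ≤ (1-γ)/α`, then with
`ε = 1 - ln((1-γ/2)/α)/ln((1-γ)/α)` and `B = 2/ε` we have `B > 2` and
`∑ qᵢ exp(-pᵢ n (1 - 2/B)) ≤ (1-γ/2)/α`. -/
theorem stmt_16 (m : ℕ) (q p : Fin m → ℝ) (n : ℕ)
    (hq0 : ∀ i, 0 ≤ q i) (hqsum : ∑ i, q i = 1)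
    (hp0 : ∀ i, 0 ≤ p i) (hp1 : ∀ i, p i ≤ 1 / 2)
    (α : ℝ) (hα : 1 ≤ α) (γ : ℝ) (hγ0 : 0 < γ) (hγ1 : γ < 1)
    (hsum : ∑ i, q i * Real.exp (-(p i) * n) ≤ (1 - γ) / α)
    (ε B : ℝ)
    (hε : ε = 1 - Real.log ((1 - γ / 2) / α) / Real.log ((1 - γ) / α))
    (hB : B = 2 / ε) :
    2 < B ∧ ∑ i, q i * Real.exp (-(p i) * n * (1 - 2 / B)) ≤ (1 - γ / 2) / α :=
  stmt_16_general m q p n hq0 hqsum α hα γ hγ0 hγ1 hsum ε B hε hB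
end

section
/- Let $x^*, x, y \in \{0,1\}^n$ with Hamming distances satisfying $H(x, x^*) \ge H(y, x^*)$, and let $p \le 1/2$. Let $x'$ (resp. $y'$) be obtained from $x$ (resp. $y$) by flipping each bit independently with probability $p$. Then $H(y', x^*)$ is stochastically dominated by $H(x', x^*)$. -/
/-!
Write the mutant of `x` as `x ⊕ ω`, where the mask `ω` has independent bits equal to `1` with
probability `p`. Then `H(x ⊕ ω, x*) = H(ω, a)` for `a = x ⊕ x*`, whose number of ones is
`H(x, x*)`. For antitone `g`, the expectation `𝔼[g (H(ω, a))]` is invariant under permuting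
coordinates, so it suffices that it decreases when one bit `a i` is raised from `0` to `1`.
Pair each mask with its flip at `i`: the heavier one of the pair, of weight `q ≥ q'` (it has
`ω i = 0`, as `1 - p ≥ p`), is at distance `m` from `a` before the change and `m + 1` after,
the lighter one the other way round, and `q g(m+1) + q' g(m) ≤ q g(m) + q' g(m+1)` is the
rearrangement inequality.
-/

open MeasureTheory ENNReal Finset Function NNReal

namespace BitMutation

variable {ι : Type*}

section Flip

variable [DecidableEq ι]

def flipAt (i : ι) (ω : ι → Bool) : ι → Bool := update ω i (!ω i)

lemma flipAt_involutive (i : ι) : Involutive (flipAt i) := by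
  intro ω
  simp [flipAt]

lemma flipAt_update (a : ι → Bool) (i : ι) (c : Bool) :
    flipAt i (update a i c) = update a i (!c) := by
  simp [flipAt]

variable [Fintype ι]

lemma hammingDist_flipAt_flipAt (i : ι) (ω a : ι → Bool) :
    hammingDist (flipAt i ω) (flipAt i a) = hammingDist ω a := by
  unfold hammingDist
  congr 1
  refine filter_congr fun j _ => ?_
  rcases eq_or_ne j i with rfl | hj
  · simp [flipAt]
  · simp [flipAt, update_of_ne hj]

lemma hammingDist_flipAt_of_eq {i : ι} {ω a : ι → Bool} (h : ω i = a i) :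
    hammingDist (flipAt i ω) a = hammingDist ω a + 1 := by
  unfold hammingDist
  rw [← card_insert_of_notMem (s := filter _ _) (a := i) (by simp [h])]
  congr 1
  ext j
  rcases eq_or_ne j i with rfl | hj
  · simp [flipAt, h]
  · simp [flipAt, update_apply, hj]

end Flip

variable [Fintype ι]

lemma hammingDist_comp_perm (σ : Equiv.Perm ι) (ω a : ι → Bool) :
    hammingDist (ω ∘ σ) (a ∘ σ) = hammingDist ω a := by
  unfold hammingDist
  exact card_bij' (fun j _ => σ j) (fun j _ => σ.symm j) (by simp) (by simp) (by simp) (by simp)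

lemma hammingDist_xor_left (x ω y : ι → Bool) :
    hammingDist (fun i => xor (x i) (ω i)) y = hammingDist ω (fun i => xor (x i) (y i)) := by
  rw [← hammingDist_comp (fun i => xor (x i))
    fun i => Involutive.injective (Bool.bne_self_left (x i))]
  simp

lemma card_xor_eq_true (x y : ι → Bool) :
    #{i | xor (x i) (y i) = true} = hammingDist x y := by
  simp [hammingDist]

lemma exists_perm_comp_le {a b : ι → Bool} (h : #{i | b i = true} ≤ #{i | a i = true}) :
    ∃ σ : Equiv.Perm ι, b ∘ σ ≤ a := by
  classical
  obtain ⟨T, hTa, hT⟩ := exists_subset_card_eq h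
  let e : {i // i ∈ T} ≃ {i // i ∈ ({i | b i = true} : Finset ι)} := equivOfCardEq hT
  refine ⟨e.extendSubtype, fun i => Bool.le_iff_imp.mpr fun hb => ?_⟩
  by_contra ha
  exact e.extendSubtype_not_mem i (fun hi => by simpa [ha] using hTa hi) (by simpa using hb)

noncomputable def maskProb (p : ℝ≥0) (ω : ι → Bool) : ℝ≥0 := ∏ i, cond (ω i) p (1 - p)

lemma maskProb_comp_perm (p : ℝ≥0) (σ : Equiv.Perm ι) (ω : ι → Bool) :
    maskProb p (ω ∘ σ) = maskProb p ω :=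
  Equiv.prod_comp σ fun i => cond (ω i) p (1 - p)

lemma maskProb_update_true_le [DecidableEq ι] {p : ℝ≥0} (hp : p ≤ 1 - p) (ω : ι → Bool)
    (i : ι) : maskProb p (update ω i true) ≤ maskProb p (update ω i false) := by
  simp only [maskProb, ← comp_apply (f := fun b : Bool => cond b p (1 - p)), comp_update,
    prod_update_of_mem (mem_univ i), cond_true, cond_false]
  gcongr

section Expectation

variable [DecidableEq ι]

noncomputable def expectHammingDist (p : ℝ≥0) (g : ℕ → ℝ≥0) (a : ι → Bool) : ℝ≥0 :=
  ∑ ω, maskProb p ω * g (hammingDist ω a)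

variable {p : ℝ≥0} {g : ℕ → ℝ≥0}

lemma expectHammingDist_update_true_le (hp : p ≤ 1 - p) (hg : Antitone g) (a : ι → Bool)
    (i : ι) :
    expectHammingDist p g (update a i true) ≤ expectHammingDist p g (update a i false) := by
  set a₀ := update a i false
  have hflip : update a i true = flipAt i a₀ := by simp [a₀, flipAt_update]
  have hdist (ω : ι → Bool) : hammingDist ω (flipAt i a₀) = hammingDist (flipAt i ω) a₀ := by
    rw [← hammingDist_flipAt_flipAt i, flipAt_involutive i a₀]
  have hsum (f : (ι → Bool) → ℝ≥0) : ∑ ω, f (flipAt i ω) = ∑ ω, f ω :=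
    Equiv.sum_comp (flipAt_involutive i).toPerm f
  have hpair (ω : ι → Bool) (hω : ω i = false) : maskProb p (flipAt i ω) ≤ maskProb p ω ∧
      g (hammingDist (flipAt i ω) a₀) ≤ g (hammingDist ω a₀) := by
    constructor
    · calc maskProb p (flipAt i ω) = maskProb p (update ω i true) := by simp [flipAt, hω]
        _ ≤ maskProb p (update ω i false) := maskProb_update_true_le hp ω i
        _ = maskProb p ω := by rw [← hω, update_eq_self]
    · exact hg (by rw [hammingDist_flipAt_of_eq (by simp [a₀, hω])]; omega)
  have hB : expectHammingDist p g (flipAt i a₀) =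
      ∑ ω, maskProb p ω * g (hammingDist (flipAt i ω) a₀) := by
    simp only [expectHammingDist, hdist]
  have hA : expectHammingDist p g (flipAt i a₀) =
      ∑ ω, maskProb p (flipAt i ω) * g (hammingDist ω a₀) := by
    rw [hB, ← hsum]
    simp only [flipAt_involutive i _]
  -- reindexing along the flip rewrites each side in two ways; summing both compares masks pairwise
  suffices h : expectHammingDist p g (flipAt i a₀) + expectHammingDist p g (flipAt i a₀) ≤
      expectHammingDist p g a₀ + expectHammingDist p g a₀ by
    rw [hflip]
    exact le_of_not_gt fun hlt => h.not_gt (add_lt_add hlt hlt)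
  calc expectHammingDist p g (flipAt i a₀) + expectHammingDist p g (flipAt i a₀)
      = ∑ ω, (maskProb p (flipAt i ω) * g (hammingDist ω a₀)
          + maskProb p ω * g (hammingDist (flipAt i ω) a₀)) := by
        rw [sum_add_distrib, ← hA, ← hB]
    _ ≤ ∑ ω, (maskProb p ω * g (hammingDist ω a₀)
          + maskProb p (flipAt i ω) * g (hammingDist (flipAt i ω) a₀)) := by
        refine sum_le_sum fun ω _ => ?_
        cases hω : ω i
        · obtain ⟨hm, hd⟩ := hpair ω hω
          rw [add_comm (maskProb p ω * _)]
          exact mul_add_mul_le_mul_add_mul hm hd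
        · obtain ⟨hm, hd⟩ := hpair (flipAt i ω) (by simp [flipAt, hω])
          rw [flipAt_involutive i ω] at hm hd
          rw [add_comm (maskProb p ω * _)]
          exact mul_add_mul_le_mul_add_mul' hm hd
    _ = expectHammingDist p g a₀ + expectHammingDist p g a₀ := by
        rw [sum_add_distrib, expectHammingDist, hsum fun ω => maskProb p ω * g (hammingDist ω a₀)]

lemma expectHammingDist_antitone (hp : p ≤ 1 - p) (hg : Antitone g) :
    Antitone (expectHammingDist (ι := ι) p g) := by
  intro a b hab
  -- raise the bits of `a` to those of `b` one coordinate at a time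
  suffices h : ∀ s : Finset ι, ∀ a b, a ≤ b → (∀ i ∉ s, a i = b i) →
      expectHammingDist p g b ≤ expectHammingDist p g a from h univ a b hab (by simp)
  intro s
  induction s using Finset.induction_on with
  | empty =>
    intro a b _ hab
    rw [funext fun i => hab i (notMem_empty i)]
  | insert i s _ ih =>
    intro a b hab has
    have hstep : expectHammingDist p g b ≤ expectHammingDist p g (update b i (a i)) := by
      cases ha : a i
      · cases hb : b i
        · rw [← hb, update_eq_self]
        · rw [← update_eq_self i b, hb, update_idem]
          exact expectHammingDist_update_true_le hp hg b i
      · rw [← Bool.eq_true_of_true_le (ha ▸ hab i), update_eq_self]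
    refine hstep.trans (ih a _ (fun j => ?_) fun j hj => ?_)
    · rcases eq_or_ne j i with rfl | hji
      · simp
      · simpa [hji] using hab j
    · rcases eq_or_ne j i with rfl | hji
      · simp
      · simpa [hji] using has j (by simp [hji, hj])

lemma expectHammingDist_comp_perm (σ : Equiv.Perm ι) (a : ι → Bool) :
    expectHammingDist p g (a ∘ σ) = expectHammingDist p g a := by
  unfold expectHammingDist
  symm
  refine Fintype.sum_equiv (σ.symm.arrowCongr (Equiv.refl Bool)) _ _ fun ω => ?_
  show _ = maskProb p (ω ∘ σ) * g (hammingDist (ω ∘ σ) (a ∘ σ))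
  rw [maskProb_comp_perm, hammingDist_comp_perm]

lemma expectHammingDist_le_of_card_le (hp : p ≤ 1 - p) (hg : Antitone g) {a b : ι → Bool}
    (h : #{i | b i = true} ≤ #{i | a i = true}) :
    expectHammingDist p g a ≤ expectHammingDist p g b := by
  obtain ⟨σ, hσ⟩ := exists_perm_comp_le h
  calc expectHammingDist p g a ≤ expectHammingDist p g (b ∘ σ) :=
        expectHammingDist_antitone hp hg hσ
    _ = expectHammingDist p g b := expectHammingDist_comp_perm σ b

lemma pi_bernoulli_apply (hp : p ≤ 1) (s : Set (ι → Bool)) [DecidablePred (· ∈ s)] :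
    Measure.pi (fun _ : ι => (PMF.bernoulli p hp).toMeasure) s = ∑ ω with ω ∈ s, maskProb p ω := by
  conv_lhs => rw [show s = ↑({ω | ω ∈ s} : Finset (ι → Bool)) by simp]
  rw [← sum_measure_singleton]
  push_cast
  refine sum_congr rfl fun ω _ => ?_
  simp [Measure.pi_singleton, PMF.bernoulli_apply, maskProb]

lemma pi_bernoulli_setOf_hammingDist_le (hp : p ≤ 1) (a : ι → Bool) (lam : ℝ) :
    Measure.pi (fun _ : ι => (PMF.bernoulli p hp).toMeasure) {ω | (hammingDist ω a : ℝ) ≤ lam} =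
      expectHammingDist p (fun m => if (m : ℝ) ≤ lam then 1 else 0) a := by
  classical
  rw [pi_bernoulli_apply, expectHammingDist, sum_filter]
  simp [mul_ite]

end Expectation

lemma antitone_ite_natCast_le (lam : ℝ) :
    Antitone fun m : ℕ => if (m : ℝ) ≤ lam then (1 : ℝ≥0) else 0 := by
  intro m k hmk
  by_cases hk : (k : ℝ) ≤ lam
  · simp [hk, (Nat.cast_le.mpr hmk).trans hk]
  · simp [hk]

end BitMutation

open BitMutation

/-- Witt's domination lemma: if `H(x,x*) ≥ H(y,x*)` and `x'`, `y'` arise from `x`, `y`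
by standard bit mutation with rate `p ≤ 1/2` (flipping each bit independently with
probability `p`, modelled by XOR with a product Bernoulli vector), then
`H(y',x*) ⪯ H(x',x*)`, i.e. `Pr[H(x',x*) ≤ λ] ≤ Pr[H(y',x*) ≤ λ]` for all `λ`. -/
theorem stmt_18 (n : ℕ) (xstar x y : Fin n → Bool)
    (hxy : hammingDist y xstar ≤ hammingDist x xstar)
    (p : NNReal) (hp : p ≤ 1 / 2) (hp1 : (p : ℝ≥0∞) ≤ 1)
    (μ : Measure (Fin n → Bool))
    (hμ : μ = Measure.pi fun _ : Fin n => (PMF.bernoulli p (ENNReal.coe_le_one_iff.mp hp1)).toMeasure) :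
    ∀ lam : ℝ,
      μ {ω | (hammingDist (fun i => xor (x i) (ω i)) xstar : ℝ) ≤ lam}
        ≤ μ {ω | (hammingDist (fun i => xor (y i) (ω i)) xstar : ℝ) ≤ lam} := by
  intro lam
  have hp' : p ≤ 1 - p := le_tsub_of_add_le_left ((add_le_add hp hp).trans (add_halves 1).le)
  simp only [hμ, hammingDist_xor_left x, hammingDist_xor_left y, pi_bernoulli_setOf_hammingDist_le]
  exact_mod_cast expectHammingDist_le_of_card_le hp' (antitone_ite_natCast_le lam)
    (by simpa only [card_xor_eq_true] using hxy)
end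

section
/- Consider a PSM process with population size $\lambda$ over a finite search space $\Omega$, potential $g: \Omega \to \mathbb{Z}_{\ge 0}$, and parameters $a < b$, $\alpha \ge 1$, $\kappa > 0$, $0 < \delta < 1$, $D \ge \delta$. Suppose: (i) for any population $P$ with all potentials $> a$, every individual $P_i$ with $g(P_i) < b$ has expected reproduction rate $E[R(i,P)] \le \alpha$; (ii) for all $x$ with $a < g(x) < b$, $E[\exp(-\kappa g(\mathrm{mut}(x)))] \le \frac{1-\delta}{\alpha}\exp(-\kappa g(x))$; (iii) for all $x$ with $g(x) \ge b$, $E[\exp(-\kappa g(\mathrm{mut}(x)))] \le D \exp(-\kappa b)$. Define $X_t = \sum_{i=1}^\lambda \exp(-\kappa g(P^{(t)}_i))$. Then for any population $P^{(t-1)}$ with all potentials $> a$, $E[X_t \mid P^{(t-1)}] \le (1-\delta) X_{t-1} + \lambda D \exp(-\kappa b)$. -/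
/-!
Condition on the selection outcome `Q`. Counting how often each parent is chosen rewrites
the expected offspring potential as `∑ⱼ E[R(j, P)] · E[exp(-κ g(mut(Pⱼ)))]`. Parents below `b`
contribute at most `α · (1 - δ)/α · exp(-κ g(Pⱼ))` each, and parents at or above `b` at most
`E[R(j, P)] · D exp(-κ b)`, where the reproduction rates sum to `λ`.
-/

open Finset

theorem PMF.tsum_toReal {α : Type*} (μ : PMF α) : ∑' a, (μ a).toReal = 1 := by
  rw [← ENNReal.tsum_toReal_eq fun a => μ.apply_ne_top a, μ.tsum_coe, ENNReal.toReal_one]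

section Reproduction

variable {ι κ : Type*} [Fintype ι] [DecidableEq κ]

theorem sum_comp_eq_sum_card_fiber_mul [Fintype κ] (Q : ι → κ) (f : κ → ℝ) :
    ∑ i, f (Q i) = ∑ j, ((univ.filter fun i => Q i = j).card : ℝ) * f j := by
  rw [← sum_fiberwise univ Q (fun i => f (Q i))]
  refine sum_congr rfl fun j _ => ?_
  rw [sum_congr rfl fun i hi => congrArg f (mem_filter.mp hi).2, sum_const, nsmul_eq_mul]

theorem sum_card_fiber [Fintype κ] (Q : ι → κ) :
    ∑ j, ((univ.filter fun i => Q i = j).card : ℝ) = Fintype.card ι := by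
  exact_mod_cast (card_eq_sum_card_fiberwise fun i _ => mem_univ (Q i)).symm

/-- The paper's `E[R(j, P)]` for the selection distribution `μ = sel P`. -/
noncomputable def expectedReproduction (μ : PMF (ι → κ)) (j : κ) : ℝ :=
  ∑' Q : ι → κ, (μ Q).toReal * ((univ.filter fun i => Q i = j).card : ℝ)

theorem expectedReproduction_nonneg (μ : PMF (ι → κ)) (j : κ) :
    0 ≤ expectedReproduction μ j :=
  tsum_nonneg fun _ => mul_nonneg ENNReal.toReal_nonneg (Nat.cast_nonneg _)

variable [DecidableEq ι] [Fintype κ]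

theorem sum_expectedReproduction (μ : PMF (ι → κ)) :
    ∑ j, expectedReproduction μ j = Fintype.card ι := by
  simp only [expectedReproduction, tsum_fintype]
  rw [sum_comm]
  simp only [← mul_sum, sum_card_fiber, ← sum_mul]
  rw [← tsum_fintype (L := .unconditional _), PMF.tsum_toReal, one_mul]

theorem tsum_mul_sum_comp_eq_sum_expectedReproduction_mul (μ : PMF (ι → κ)) (f : κ → ℝ) :
    ∑' Q : ι → κ, (μ Q).toReal * ∑ i, f (Q i) = ∑ j, expectedReproduction μ j * f j := by
  simp only [expectedReproduction, tsum_fintype, sum_comp_eq_sum_card_fiber_mul _ f, mul_sum,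
    sum_mul]
  rw [sum_comm]
  simp only [mul_assoc]

end Reproduction

theorem sum_mul_le_of_low_high {κ : Type*} [Fintype κ] (p : κ → Prop) [DecidablePred p]
    (E M u : κ → ℝ) {n α r C : ℝ} (hE : ∀ j, 0 ≤ E j) (hE_sum : ∑ j, E j = n)
    (hα : 0 < α) (hr : 0 ≤ r) (hu : ∀ j, 0 ≤ u j) (hC : 0 ≤ C)
    (hE_low : ∀ j, p j → E j ≤ α) (hM_low : ∀ j, p j → M j ≤ 1 / α * r * u j)
    (hM_high : ∀ j, ¬ p j → M j ≤ C) :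
    ∑ j, E j * M j ≤ r * ∑ j, u j + n * C := by
  rw [← sum_filter_add_sum_filter_not univ p]
  have h_low : ∑ j ∈ univ.filter p, E j * M j ≤ r * ∑ j, u j := calc
    ∑ j ∈ univ.filter p, E j * M j ≤ ∑ j ∈ univ.filter p, r * u j := by
      refine sum_le_sum fun j hj => ?_
      have hj := (mem_filter.mp hj).2
      calc E j * M j ≤ E j * (1 / α * r * u j) := by gcongr; exacts [hE j, hM_low j hj]
        _ ≤ α * (1 / α * r * u j) :=
          mul_le_mul_of_nonneg_right (hE_low j hj) (by have := hu j; positivity)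
        _ = r * u j := by field_simp
    _ ≤ r * ∑ j, u j := by
      rw [← mul_sum]
      exact mul_le_mul_of_nonneg_left
        (sum_le_sum_of_subset_of_nonneg (filter_subset _ _) fun j _ _ => hu j) hr
  have h_high : ∑ j ∈ univ.filter (¬ p ·), E j * M j ≤ n * C := calc
    ∑ j ∈ univ.filter (¬ p ·), E j * M j ≤ (∑ j ∈ univ.filter (¬ p ·), E j) * C := by
      rw [sum_mul]
      exact sum_le_sum fun j hj => mul_le_mul_of_nonneg_left
        (hM_high j (mem_filter.mp hj).2) (hE j)
    _ ≤ n * C := by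
      rw [← hE_sum]
      exact mul_le_mul_of_nonneg_right
        (sum_le_sum_of_subset_of_nonneg (filter_subset _ _) fun j _ _ => hE j) hC
  exact add_le_add h_low h_high

theorem stmt_19_general {Ω : Type*} (lam : ℕ)
    (sel : (Fin lam → Ω) → PMF (Fin lam → Fin lam))
    (mutOp : Ω → PMF Ω)
    (g : Ω → ℕ) (a b : ℕ)
    (α : ℝ) (hα : 1 ≤ α) (κ : ℝ)
    (δ : ℝ) (hδ0 : 0 < δ) (hδ1 : δ < 1) (D : ℝ) (hD : δ ≤ D)
    -- (i) bounded reproduction rate below potential `b` when no potential is ≤ a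
    (hsel : ∀ P : Fin lam → Ω, (∀ i, a < g (P i)) → ∀ i, g (P i) < b →
      (∑' Q : Fin lam → Fin lam,
          ((sel P) Q).toReal * ((Finset.univ.filter fun j => Q j = i).card : ℝ)) ≤ α)
    -- (ii) multiplicative drift of the potential under mutation
    (hmut2 : ∀ x : Ω, a < g x → g x < b →
      (∑' y : Ω, ((mutOp x) y).toReal * Real.exp (-κ * g y))
        ≤ (1 / α) * (1 - δ) * Real.exp (-κ * g x))
    -- (iii) bounded potential gain from individuals above `b`
    (hmut3 : ∀ x : Ω, b ≤ g x →
      (∑' y : Ω, ((mutOp x) y).toReal * Real.exp (-κ * g y))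
        ≤ D * Real.exp (-κ * b))
    (P : Fin lam → Ω) (hP : ∀ i, a < g (P i)) :
    (∑' Q : Fin lam → Fin lam, ((sel P) Q).toReal *
        ∑ i : Fin lam, ∑' y : Ω, ((mutOp (P (Q i))) y).toReal * Real.exp (-κ * g y))
      ≤ (1 - δ) * (∑ i : Fin lam, Real.exp (-κ * g (P i)))
          + lam * D * Real.exp (-κ * b) := by
  rw [tsum_mul_sum_comp_eq_sum_expectedReproduction_mul (sel P)
    fun j => ∑' y : Ω, ((mutOp (P j)) y).toReal * Real.exp (-κ * g y), mul_assoc _ D]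
  refine sum_mul_le_of_low_high (fun j => g (P j) < b) _ _ _ (expectedReproduction_nonneg _)
    (by rw [sum_expectedReproduction, Fintype.card_fin]) (by linarith) (by linarith)
    (fun _ => (Real.exp_pos _).le) (mul_nonneg (by linarith) (Real.exp_pos _).le) (fun j hj => hsel P hP j hj)
    (fun j hj => hmut2 _ (hP j) hj) (fun j hj => hmut3 _ (not_lt.mp hj))

/-- One-step drift computation at the heart of the negative drift in populations
theorem: a PSM process over a finite search space `Ω` with population size `lam`,
selection kernel `sel` (an arbitrary distribution on index tuples) and mutation
kernel `mutOp`. With `X_t = ∑ᵢ exp(-κ g(Pᵢ^{(t)}))`, for any parent population `P`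
with all potentials `> a`, `E[X_t ∣ P] ≤ (1-δ) X_{t-1} + λ D exp(-κ b)`. -/
theorem stmt_19 {Ω : Type*} [Fintype Ω] (lam : ℕ)
    (sel : (Fin lam → Ω) → PMF (Fin lam → Fin lam))
    (mutOp : Ω → PMF Ω)
    (g : Ω → ℕ) (a b : ℕ) (hab : a < b)
    (α : ℝ) (hα : 1 ≤ α) (κ : ℝ) (hκ : 0 < κ)
    (δ : ℝ) (hδ0 : 0 < δ) (hδ1 : δ < 1) (D : ℝ) (hD : δ ≤ D)
    -- (i) bounded reproduction rate below potential `b` when no potential is ≤ a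
    (hsel : ∀ P : Fin lam → Ω, (∀ i, a < g (P i)) → ∀ i, g (P i) < b →
      (∑' Q : Fin lam → Fin lam,
          ((sel P) Q).toReal * ((Finset.univ.filter fun j => Q j = i).card : ℝ)) ≤ α)
    -- (ii) multiplicative drift of the potential under mutation
    (hmut2 : ∀ x : Ω, a < g x → g x < b →
      (∑' y : Ω, ((mutOp x) y).toReal * Real.exp (-κ * g y))
        ≤ (1 / α) * (1 - δ) * Real.exp (-κ * g x))
    -- (iii) bounded potential gain from individuals above `b`
    (hmut3 : ∀ x : Ω, b ≤ g x →
      (∑' y : Ω, ((mutOp x) y).toReal * Real.exp (-κ * g y))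
        ≤ D * Real.exp (-κ * b))
    (P : Fin lam → Ω) (hP : ∀ i, a < g (P i)) :
    (∑' Q : Fin lam → Fin lam, ((sel P) Q).toReal *
        ∑ i : Fin lam, ∑' y : Ω, ((mutOp (P (Q i))) y).toReal * Real.exp (-κ * g y))
      ≤ (1 - δ) * (∑ i : Fin lam, Real.exp (-κ * g (P i)))
          + lam * D * Real.exp (-κ * b) :=
  stmt_19_general lam sel mutOp g a b α hα κ δ hδ0 hδ1 D hD hsel hmut2 hmut3 P hP
end
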